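/- arXiv:math-ph/0508039 — 4 statements merged into one kernel-verified Lean document; each statement's English description precedes it below -/
import Mathlib

section
/- If φ: [0,∞) → [0,∞) is nonincreasing with ∫₀^∞ r^{n-2} φ(r)^{1/2} dr < ∞ (n ≥ 2), then ∫₀^∞ r^{n-1} φ(r) dr < ∞. -/
/-!
For an antitone `g ≥ 0`, comparing `g` on `(0, r]` with `g r` gives
`r ^ (k + 1) * g r ≤ (k + 1) * ∫₀^∞ s ^ k g(s) ds =: C`. Hence on `(1, ∞)` the integrand
`s ^ m * g s ^ 2` is at most `C * s ^ k * g s`, while on `(0, 1]` it is bounded by `g 0 ^ 2`.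
Apply this to `g = √φ`.
-/

open MeasureTheory Set

theorem pow_succ_mul_le_integral_of_antitoneOn {g : ℝ → ℝ} {k : ℕ}
    (hg0 : ∀ s ∈ Ioi (0 : ℝ), 0 ≤ g s) (hg : AntitoneOn g (Ioi 0))
    (hint : IntegrableOn (fun s => s ^ k * g s) (Ioi 0)) {r : ℝ} (hr : 0 < r) :
    r ^ (k + 1) * g r ≤ (k + 1) * ∫ s in Ioi 0, s ^ k * g s := by
  have hIoc : Ioc 0 r ⊆ Ioi (0 : ℝ) := Ioc_subset_Ioi_self
  calc r ^ (k + 1) * g r = (k + 1) * ∫ s in Ioc 0 r, s ^ k * g r := by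
        rw [← intervalIntegral.integral_of_le hr.le, intervalIntegral.integral_mul_const,
          integral_pow]
        field_simp
        ring
    _ ≤ (k + 1) * ∫ s in Ioc 0 r, s ^ k * g s := by
        refine mul_le_mul_of_nonneg_left ?_ (by positivity)
        refine setIntegral_mono_on ?_ (hint.mono_set hIoc) measurableSet_Ioc fun s hs => ?_
        · exact (continuous_pow k |>.mul continuous_const).integrableOn_Ioc
        · exact mul_le_mul_of_nonneg_left (hg hs.1 hr hs.2) (pow_nonneg hs.1.le k)
    _ ≤ (k + 1) * ∫ s in Ioi 0, s ^ k * g s := by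
        refine mul_le_mul_of_nonneg_left ?_ (by positivity)
        refine setIntegral_mono_set hint ?_ hIoc.eventuallyLE
        filter_upwards [ae_restrict_mem measurableSet_Ioi] with s hs
        exact mul_nonneg (pow_nonneg (le_of_lt hs) k) (hg0 s hs)

theorem integrableOn_pow_mul_sq_of_antitoneOn {g : ℝ → ℝ} {k m : ℕ} (hm : m ≤ k + 1)
    (hg0 : ∀ s ∈ Ici (0 : ℝ), 0 ≤ g s) (hg : AntitoneOn g (Ici 0))
    (hint : IntegrableOn (fun s => s ^ k * g s) (Ioi 0)) :
    IntegrableOn (fun s => s ^ m * g s ^ 2) (Ioi 0) := by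
  have hmeas : AEStronglyMeasurable (fun s => s ^ m * g s ^ 2) (volume.restrict (Ioi 0)) :=
    ((measurable_id.pow_const m).aemeasurable.mul
      ((aemeasurable_restrict_of_antitoneOn measurableSet_Ioi
        (hg.mono Ioi_subset_Ici_self)).pow_const 2)).aestronglyMeasurable
  set C := (k + 1) * ∫ s in Ioi 0, s ^ k * g s
  have hbound : ∀ s, 0 < s → s ^ (k + 1) * g s ≤ C := fun s hs =>
    pow_succ_mul_le_integral_of_antitoneOn (fun s hs => hg0 s (mem_Ici.2 (le_of_lt hs)))
      (hg.mono Ioi_subset_Ici_self) hint hs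
  rw [← Ioc_union_Ioi_eq_Ioi zero_le_one]
  refine IntegrableOn.union ?_ ?_
  · refine IntegrableOn.of_bound measure_Ioc_lt_top
      (hmeas.mono_measure (Measure.restrict_mono Ioc_subset_Ioi_self le_rfl)) (g 0 ^ 2) ?_
    filter_upwards [ae_restrict_mem measurableSet_Ioc] with s ⟨hs0, hs1⟩
    have hgs : 0 ≤ g s := hg0 s hs0.le
    rw [Real.norm_of_nonneg (by positivity)]
    calc s ^ m * g s ^ 2 ≤ 1 * g 0 ^ 2 := by
          gcongr
          · exact pow_le_one₀ hs0.le hs1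
          · exact hg self_mem_Ici hs0.le hs0.le
      _ = g 0 ^ 2 := one_mul _
  · refine Integrable.mono' ((hint.mono_set (Ioi_subset_Ioi zero_le_one)).const_mul C)
      (hmeas.mono_measure (Measure.restrict_mono (Ioi_subset_Ioi zero_le_one) le_rfl)) ?_
    filter_upwards [ae_restrict_mem measurableSet_Ioi] with s (hs : 1 < s)
    have hgs : 0 ≤ g s := hg0 s (zero_le_one.trans hs.le)
    rw [Real.norm_of_nonneg (by positivity)]
    calc s ^ m * g s ^ 2 ≤ s ^ (k + 1) * g s * g s := by
          rw [sq, ← mul_assoc]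
          gcongr
          exact hs.le
      _ ≤ C * g s := by gcongr; exact hbound s (zero_lt_one.trans hs)
      _ ≤ C * (s ^ k * g s) := by
          have hC : 0 ≤ C := (hbound s (zero_lt_one.trans hs)).trans' (by positivity)
          gcongr
          exact le_mul_of_one_le_left hgs (one_le_pow₀ hs.le)

theorem stmt_1_general (n : ℕ) (φ : ℝ → ℝ)
    (hφ0 : ∀ r, 0 ≤ r → 0 ≤ φ r)
    (hmono : AntitoneOn φ (Ici 0))
    (hint : IntegrableOn (fun r => r ^ (n - 2) * Real.sqrt (φ r)) (Ioi 0)) :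
    IntegrableOn (fun r => r ^ (n - 1) * φ r) (Ioi 0) := by
  have hsqrt : IntegrableOn (fun r => r ^ (n - 1) * Real.sqrt (φ r) ^ 2) (Ioi 0) :=
    integrableOn_pow_mul_sq_of_antitoneOn (by omega) (fun s _ => Real.sqrt_nonneg _)
      (fun a ha b hb hab => Real.sqrt_le_sqrt (hmono ha hb hab)) hint
  refine hsqrt.congr_fun (fun r hr => ?_) measurableSet_Ioi
  simp only [Real.sq_sqrt (hφ0 r (le_of_lt hr))]

theorem stmt_1 (n : ℕ) (hn : 2 ≤ n) (φ : ℝ → ℝ)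
    (hφ0 : ∀ r, 0 ≤ r → 0 ≤ φ r)
    (hmono : AntitoneOn φ (Ici 0))
    (hint : IntegrableOn (fun r => r ^ (n - 2) * Real.sqrt (φ r)) (Ioi 0)) :
    IntegrableOn (fun r => r ^ (n - 1) * φ r) (Ioi 0) :=
  stmt_1_general n φ hφ0 hmono hint
end

section
/- Let (ξ, η) be complex-valued random variables with E|ξ|² ≤ a², E|η|² ≤ b², measurable with respect to σ-algebras 𝒜, ℬ whose Ibragimov–Linnik mixing coefficient is φ. Then |E(ξη) − Eξ·Eη| ≤ C a b φ^{1/2} for an absolute constant C. -/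
/-!
For functions taking finitely many values, `f = ∑ c • 1_{A_c}` with `A_c ∈ 𝒜` and
`g = ∑ d • 1_{B_d}` with `B_d ∈ ℬ`, the covariance is `∑ c d (P(A_c ∩ B_d) - P(A_c) P(B_d))`.
A family of reals all of whose partial sums are bounded by `K` has absolute sum at most `2K`;
hence the weights have row sums at most `2 P(A_c)` and, by φ-mixing, column sums at most
`2 φ P(B_d)`, and Cauchy–Schwarz gives `‖Cov(f, g)‖ ≤ 2 √φ ‖f‖₂ ‖g‖₂`. General `ξ, η` are
approximated in `L²` by such functions, measurable for `𝒜` and `ℬ` respectively; the covariance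
is bilinear and bounded by `2 ‖u‖₂ ‖v‖₂`, so the bound passes to the limit.
-/

open MeasureTheory Finset Filter Topology

theorem Finset.sum_abs_le_two_mul_of_forall_subset {ι : Type*} (s : Finset ι) (d : ι → ℝ)
    {K : ℝ} (h : ∀ S ⊆ s, |∑ i ∈ S, d i| ≤ K) : ∑ i ∈ s, |d i| ≤ 2 * K := by
  classical
  have hpos := h (s.filter (0 ≤ d ·)) (filter_subset _ _)
  have hneg := h (s.filter (¬ 0 ≤ d ·)) (filter_subset _ _)
  have epos : ∑ i ∈ s.filter (0 ≤ d ·), |d i| = ∑ i ∈ s.filter (0 ≤ d ·), d i :=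
    sum_congr rfl fun i hi => abs_of_nonneg (mem_filter.1 hi).2
  have eneg : ∑ i ∈ s.filter (¬ 0 ≤ d ·), |d i| = -∑ i ∈ s.filter (¬ 0 ≤ d ·), d i := by
    rw [← sum_neg_distrib]
    exact sum_congr rfl fun i hi => abs_of_neg (not_le.1 (mem_filter.1 hi).2)
  rw [← sum_filter_add_sum_filter_not s (0 ≤ d ·), epos, eneg]
  linarith [le_abs_self (∑ i ∈ s.filter (0 ≤ d ·), d i),
    neg_abs_le (∑ i ∈ s.filter (¬ 0 ≤ d ·), d i)]

theorem norm_sum_sum_smul_mul_le {ι κ E : Type*} [SeminormedRing E] [NormedSpace ℝ E]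
    (s : Finset ι) (t : Finset κ) (w : ι → κ → ℝ) (x : ι → E) (y : κ → E)
    (α : ι → ℝ) (β : κ → ℝ) (hrow : ∀ i ∈ s, ∑ j ∈ t, |w i j| ≤ α i)
    (hcol : ∀ j ∈ t, ∑ i ∈ s, |w i j| ≤ β j) :
    ‖∑ i ∈ s, ∑ j ∈ t, w i j • (x i * y j)‖ ≤
      √(∑ i ∈ s, α i * ‖x i‖ ^ 2) * √(∑ j ∈ t, β j * ‖y j‖ ^ 2) := calc
  _ ≤ ∑ i ∈ s, ∑ j ∈ t, √(|w i j| * ‖x i‖ ^ 2) * √(|w i j| * ‖y j‖ ^ 2) := by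
    refine (norm_sum_le _ _).trans <| sum_le_sum fun i _ =>
      (norm_sum_le _ _).trans <| sum_le_sum fun j _ => ?_
    rw [← Real.sqrt_mul (by positivity),
      show |w i j| * ‖x i‖ ^ 2 * (|w i j| * ‖y j‖ ^ 2) = (|w i j| * (‖x i‖ * ‖y j‖)) ^ 2 by
        ring,
      Real.sqrt_sq (by positivity), norm_smul, Real.norm_eq_abs]
    gcongr
    exact norm_mul_le _ _
  _ = ∑ p ∈ s ×ˢ t, √(|w p.1 p.2| * ‖x p.1‖ ^ 2) * √(|w p.1 p.2| * ‖y p.2‖ ^ 2) := by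
    rw [sum_product]
  _ ≤ √(∑ p ∈ s ×ˢ t, |w p.1 p.2| * ‖x p.1‖ ^ 2) *
        √(∑ p ∈ s ×ˢ t, |w p.1 p.2| * ‖y p.2‖ ^ 2) :=
    Real.sum_sqrt_mul_sqrt_le _ (fun _ => by positivity) (fun _ => by positivity)
  _ ≤ _ := by
    rw [sum_product, sum_product_right]
    dsimp only
    gcongr with i hi j hj
    · rw [← sum_mul]
      exact mul_le_mul_of_nonneg_right (hrow i hi) (by positivity)
    · rw [← sum_mul]
      exact mul_le_mul_of_nonneg_right (hcol j hj) (by positivity)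

section SetCov

variable {Ω ι : Type*} {m0 : MeasurableSpace Ω} {P : Measure Ω} {A B : Set Ω}

def setCov (P : Measure Ω) (A B : Set Ω) : ℝ := P.real (A ∩ B) - P.real A * P.real B

theorem setCov_comm (P : Measure Ω) (A B : Set Ω) : setCov P A B = setCov P B A := by
  simp only [setCov, Set.inter_comm, mul_comm]

theorem abs_setCov_le [IsProbabilityMeasure P] (A B : Set Ω) : |setCov P A B| ≤ P.real B := by
  have hAB : P.real (A ∩ B) ≤ P.real B := measureReal_mono Set.inter_subset_right
  have hA : P.real A ≤ 1 := measureReal_le_one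
  rw [setCov, abs_le]
  constructor <;> nlinarith [measureReal_nonneg (μ := P) (s := A ∩ B),
    measureReal_nonneg (μ := P) (s := A), measureReal_nonneg (μ := P) (s := B)]

theorem setCov_biUnion [IsFiniteMeasure P] {s : Finset ι} {A : ι → Set Ω}
    (hd : (s : Set ι).PairwiseDisjoint A) (hA : ∀ i ∈ s, MeasurableSet (A i))
    (hB : MeasurableSet B) : setCov P (⋃ i ∈ s, A i) B = ∑ i ∈ s, setCov P (A i) B := by
  rw [setCov, Set.iUnion₂_inter, measureReal_biUnion_finset (μ := P) hd hA,
    measureReal_biUnion_finset (μ := P) (hd.mono fun i => Set.inter_subset_left)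
      (fun i hi => (hA i hi).inter hB), sum_mul, ← sum_sub_distrib]
  rfl

theorem sum_abs_setCov_le [IsFiniteMeasure P] {s : Finset ι} {A : ι → Set Ω}
    (hd : (s : Set ι).PairwiseDisjoint A) (hA : ∀ i ∈ s, MeasurableSet (A i))
    (hB : MeasurableSet B) {K : ℝ} (h : ∀ S ⊆ s, |setCov P (⋃ i ∈ S, A i) B| ≤ K) :
    ∑ i ∈ s, |setCov P (A i) B| ≤ 2 * K :=
  sum_abs_le_two_mul_of_forall_subset s _ fun S hS => by
    rw [← setCov_biUnion (hd.subset (coe_subset.2 hS)) (fun i hi => hA i (hS hi)) hB]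
    exact h S hS

end SetCov

section Integrals

variable {Ω : Type*} {m0 : MeasurableSpace Ω} {P : Measure Ω}

theorem comp_eq_sum_indicator_fiber {α F : Type*} [AddCommMonoid F] (f : Ω → α)
    (s : Finset α) (hs : ∀ ω, f ω ∈ s) (G : α → F) :
    (fun ω => G (f ω)) = fun ω => ∑ c ∈ s, (f ⁻¹' {c}).indicator (fun _ => G c) ω := by
  classical
  funext ω
  simp only [Set.indicator_apply, Set.mem_preimage, Set.mem_singleton_iff,
    sum_ite_eq, if_pos (hs ω)]

theorem stronglyMeasurable_of_measurableSet_fiber {F : Type*} [AddCommMonoid F]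
    [TopologicalSpace F] [ContinuousAdd F] {m : MeasurableSpace Ω} {f : Ω → F} {s : Finset F}
    (hs : ∀ ω, f ω ∈ s) (hf : ∀ c, MeasurableSet[m] (f ⁻¹' {c})) : StronglyMeasurable[m] f := by
  rw [show f = fun ω => id (f ω) from rfl, comp_eq_sum_indicator_fiber f s hs id]
  exact s.stronglyMeasurable_fun_sum fun c _ => stronglyMeasurable_const.indicator (hf c)

theorem integral_comp_eq_sum_fiber {α F : Type*} [NormedAddCommGroup F] [NormedSpace ℝ F]
    [CompleteSpace F] [IsFiniteMeasure P] (f : Ω → α) (s : Finset α) (hs : ∀ ω, f ω ∈ s)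
    (hf : ∀ c ∈ s, MeasurableSet (f ⁻¹' {c})) (G : α → F) :
    ∫ ω, G (f ω) ∂P = ∑ c ∈ s, P.real (f ⁻¹' {c}) • G c := by
  rw [comp_eq_sum_indicator_fiber f s hs G,
    integral_finsetSum _ fun c hc => (integrable_const _).indicator (hf c hc)]
  exact sum_congr rfl fun c hc => integral_indicator_const _ (hf c hc)

theorem lpNorm_two_eq_sqrt_integral {F : Type*} [NormedAddCommGroup F] {u : Ω → F}
    (hu : AEStronglyMeasurable u P) : lpNorm u 2 P = √(∫ ω, ‖u ω‖ ^ 2 ∂P) := by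
  rw [lpNorm_eq_integral_norm_rpow_toReal two_ne_zero ENNReal.ofNat_ne_top hu,
    Real.sqrt_eq_rpow]
  simp

theorem norm_integral_le_lpNorm_two {F : Type*} [NormedAddCommGroup F] [NormedSpace ℝ F]
    [IsProbabilityMeasure P] {u : Ω → F} (hu : MemLp u 2 P) :
    ‖∫ ω, u ω ∂P‖ ≤ lpNorm u 2 P := calc
  _ ≤ ∫ ω, ‖u ω‖ ∂P := norm_integral_le_integral_norm _
  _ = (eLpNorm u 1 P).toReal := by rw [toReal_eLpNorm hu.1, lpNorm_one_eq_integral_norm hu.1]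
  _ ≤ lpNorm u 2 P := by
    rw [← toReal_eLpNorm hu.1]
    exact ENNReal.toReal_mono hu.eLpNorm_ne_top
      (eLpNorm_le_eLpNorm_of_exponent_le one_le_two hu.1)

theorem sq_lpNorm_two_eq_sum_fiber {F : Type*} [NormedAddCommGroup F] [IsFiniteMeasure P]
    {f : Ω → F} {s : Finset F} (hs : ∀ ω, f ω ∈ s) (hf : ∀ c, MeasurableSet (f ⁻¹' {c})) :
    lpNorm f 2 P ^ 2 = ∑ c ∈ s, P.real (f ⁻¹' {c}) * ‖c‖ ^ 2 := by
  rw [lpNorm_two_eq_sqrt_integral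
      (stronglyMeasurable_of_measurableSet_fiber hs hf).aestronglyMeasurable,
    Real.sq_sqrt (integral_nonneg fun _ => by positivity),
    integral_comp_eq_sum_fiber f s hs (fun c _ => hf c) (‖·‖ ^ 2)]
  rfl

variable {E : Type*} [NormedRing E]

theorem integrable_mul_of_memLp_two {u v : Ω → E} (hu : MemLp u 2 P) (hv : MemLp v 2 P) :
    Integrable (fun ω => u ω * v ω) P :=
  memLp_one_iff_integrable.1 (hv.mul' hu)

theorem norm_integral_mul_le_lpNorm_mul_lpNorm [NormedSpace ℝ E] {u v : Ω → E}
    (hu : MemLp u 2 P) (hv : MemLp v 2 P) :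
    ‖∫ ω, u ω * v ω ∂P‖ ≤ lpNorm u 2 P * lpNorm v 2 P := calc
  _ ≤ ∫ ω, ‖u ω * v ω‖ ∂P := norm_integral_le_integral_norm _
  _ = (eLpNorm (u • v) 1 P).toReal := by
    rw [toReal_eLpNorm (hu.1.smul hv.1), lpNorm_one_eq_integral_norm (hu.1.smul hv.1)]
    rfl
  _ ≤ (eLpNorm u 2 P * eLpNorm v 2 P).toReal :=
    ENNReal.toReal_mono (ENNReal.mul_ne_top hu.eLpNorm_ne_top hv.eLpNorm_ne_top)
      (eLpNorm_smul_le_mul_eLpNorm hv.1 hu.1)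
  _ = lpNorm u 2 P * lpNorm v 2 P := by
    rw [ENNReal.toReal_mul, toReal_eLpNorm hu.1, toReal_eLpNorm hv.1]

end Integrals

section Cov

variable {Ω E : Type*} {m0 : MeasurableSpace Ω} {P : Measure Ω}
  [NormedRing E] [NormedSpace ℝ E]

noncomputable def cov (P : Measure Ω) (u v : Ω → E) : E :=
  ∫ ω, u ω * v ω ∂P - (∫ ω, u ω ∂P) * ∫ ω, v ω ∂P

theorem cov_eq_sum_setCov [IsScalarTower ℝ E E] [SMulCommClass ℝ E E] [CompleteSpace E]
    [IsFiniteMeasure P] (f g : Ω → E) (s t : Finset E)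
    (hs : ∀ ω, f ω ∈ s) (ht : ∀ ω, g ω ∈ t) (hf : ∀ c, MeasurableSet (f ⁻¹' {c}))
    (hg : ∀ d, MeasurableSet (g ⁻¹' {d})) :
    cov P f g = ∑ c ∈ s, ∑ d ∈ t, setCov P (f ⁻¹' {c}) (g ⁻¹' {d}) • (c * d) := by
  have hfiber : ∀ p : E × E, (fun ω => (f ω, g ω)) ⁻¹' {p} = f ⁻¹' {p.1} ∩ g ⁻¹' {p.2} :=
    fun p => by rw [← Set.singleton_prod_singleton, Set.mk_preimage_prod]
  have hfg := integral_comp_eq_sum_fiber (P := P) (fun ω => (f ω, g ω)) (s ×ˢ t)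
    (fun ω => mem_product.2 ⟨hs ω, ht ω⟩)
    (fun p _ => hfiber p ▸ (hf p.1).inter (hg p.2)) (fun p => p.1 * p.2)
  have hf' := integral_comp_eq_sum_fiber (P := P) f s hs (fun c _ => hf c) id
  have hg' := integral_comp_eq_sum_fiber (P := P) g t ht (fun d _ => hg d) id
  simp only [hfiber, sum_product, id] at hfg hf' hg'
  rw [cov, hfg, hf', hg', sum_mul_sum, ← sum_sub_distrib]
  refine sum_congr rfl fun c _ => ?_
  rw [← sum_sub_distrib]
  refine sum_congr rfl fun d _ => ?_
  rw [setCov, sub_smul, smul_mul_smul_comm]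

theorem norm_cov_le_two_mul [IsProbabilityMeasure P] {u v : Ω → E} (hu : MemLp u 2 P)
    (hv : MemLp v 2 P) : ‖cov P u v‖ ≤ 2 * lpNorm u 2 P * lpNorm v 2 P := calc
  _ ≤ ‖∫ ω, u ω * v ω ∂P‖ + ‖∫ ω, u ω ∂P‖ * ‖∫ ω, v ω ∂P‖ :=
    (norm_sub_le _ _).trans (add_le_add_right (norm_mul_le _ _) _)
  _ ≤ lpNorm u 2 P * lpNorm v 2 P + lpNorm u 2 P * lpNorm v 2 P :=
    add_le_add (norm_integral_mul_le_lpNorm_mul_lpNorm hu hv)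
      (mul_le_mul (norm_integral_le_lpNorm_two hu) (norm_integral_le_lpNorm_two hv)
        (norm_nonneg _) lpNorm_nonneg)
  _ = 2 * lpNorm u 2 P * lpNorm v 2 P := by ring

theorem cov_sub_left [IsFiniteMeasure P] {u₁ u₂ v : Ω → E} (hu₁ : MemLp u₁ 2 P)
    (hu₂ : MemLp u₂ 2 P) (hv : MemLp v 2 P) : cov P (u₁ - u₂) v = cov P u₁ v - cov P u₂ v := by
  simp only [cov, Pi.sub_apply, sub_mul]
  rw [integral_sub (integrable_mul_of_memLp_two hu₁ hv) (integrable_mul_of_memLp_two hu₂ hv),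
    integral_sub (hu₁.integrable one_le_two) (hu₂.integrable one_le_two), sub_mul]
  abel

theorem cov_sub_right [IsFiniteMeasure P] {u v₁ v₂ : Ω → E} (hu : MemLp u 2 P)
    (hv₁ : MemLp v₁ 2 P) (hv₂ : MemLp v₂ 2 P) : cov P u (v₁ - v₂) = cov P u v₁ - cov P u v₂ := by
  simp only [cov, Pi.sub_apply, mul_sub]
  rw [integral_sub (integrable_mul_of_memLp_two hu hv₁) (integrable_mul_of_memLp_two hu hv₂),
    integral_sub (hv₁.integrable one_le_two) (hv₂.integrable one_le_two), mul_sub]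
  abel

end Cov

section PhiMixing

variable {Ω E : Type*} {mA mB m0 : MeasurableSpace Ω} {P : Measure Ω}

/-- The Ibragimov–Linnik mixing coefficient of `mA` and `mB` under `P` is at most `φ`. -/
def PhiMixing (P : Measure Ω) (mA mB : MeasurableSpace Ω) (φ : ℝ) : Prop :=
  ∀ A B, MeasurableSet[mA] A → MeasurableSet[mB] B → |setCov P A B| ≤ φ * P.real B

theorem exists_finite_range_lpNorm_sub_le [NormedAddCommGroup E] (hmA : mA ≤ m0)
    {ξ : Ω → E} (hξ : StronglyMeasurable[mA] ξ) (hξ2 : MemLp ξ 2 P) {ε : ℝ} (hε : 0 < ε) :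
    ∃ (f : Ω → E) (s : Finset E), (∀ ω, f ω ∈ s) ∧ (∀ c, MeasurableSet[mA] (f ⁻¹' {c})) ∧
      MemLp f 2 P ∧ lpNorm (ξ - f) 2 P ≤ ε := by
  have hξ2' : MemLp ξ 2 (P.trim hmA) :=
    ⟨hξ.aestronglyMeasurable, (eLpNorm_trim hmA hξ).trans_lt hξ2.2⟩
  -- `f` is simple for `mA`, which is not the ambient instance `m0`; hence the explicit `@`s.
  obtain ⟨f, hlt, hf2⟩ :=
    @MemLp.exists_simpleFunc_eLpNorm_sub_lt _ mA _ _ _ _ _ hξ2' ENNReal.ofNat_ne_top _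
      (ENNReal.ofReal_pos.2 hε).ne'
  refine ⟨f, @SimpleFunc.range _ _ mA f, @SimpleFunc.mem_range_self _ _ mA f,
    @SimpleFunc.measurableSet_fiber _ _ mA f, memLp_of_memLp_trim hmA hf2, ?_⟩
  have hsm : StronglyMeasurable[mA] (ξ - _) :=
    hξ.sub (@SimpleFunc.stronglyMeasurable _ _ mA _ f)
  rw [← toReal_eLpNorm (hsm.mono hmA).aestronglyMeasurable, ← eLpNorm_trim hmA hsm]
  exact ENNReal.toReal_le_of_le_ofReal hε.le hlt.le

variable [NormedRing E] [NormedSpace ℝ E] [IsScalarTower ℝ E E] [SMulCommClass ℝ E E]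
  [CompleteSpace E] [IsProbabilityMeasure P]

theorem norm_cov_le_of_finite_range (hmA : mA ≤ m0) (hmB : mB ≤ m0) {φ : ℝ} (hφ : 0 ≤ φ)
    (hmix : PhiMixing P mA mB φ) {f g : Ω → E} {s t : Finset E} (hs : ∀ ω, f ω ∈ s)
    (ht : ∀ ω, g ω ∈ t) (hf : ∀ c, MeasurableSet[mA] (f ⁻¹' {c}))
    (hg : ∀ d, MeasurableSet[mB] (g ⁻¹' {d})) :
    ‖cov P f g‖ ≤ 2 * √φ * lpNorm f 2 P * lpNorm g 2 P := by
  have hf0 : ∀ c, MeasurableSet (f ⁻¹' {c}) := fun c => hmA _ (hf c)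
  have hg0 : ∀ d, MeasurableSet (g ⁻¹' {d}) := fun d => hmB _ (hg d)
  have hrow : ∀ c ∈ s, ∑ d ∈ t, |setCov P (f ⁻¹' {c}) (g ⁻¹' {d})| ≤
      2 * P.real (f ⁻¹' {c}) := fun c _ => by
    simp only [setCov_comm P (f ⁻¹' {c})]
    exact sum_abs_setCov_le (Set.pairwiseDisjoint_fiber g _) (fun d _ => hg0 d) (hf0 c)
      fun S _ => abs_setCov_le _ _
  have hcol : ∀ d ∈ t, ∑ c ∈ s, |setCov P (f ⁻¹' {c}) (g ⁻¹' {d})| ≤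
      2 * (φ * P.real (g ⁻¹' {d})) := fun d _ =>
    sum_abs_setCov_le (Set.pairwiseDisjoint_fiber f _) (fun c _ => hf0 c) (hg0 d) fun S _ =>
      hmix _ _ (S.measurableSet_biUnion fun c _ => hf c) (hg d)
  rw [cov_eq_sum_setCov f g s t hs ht hf0 hg0]
  refine (norm_sum_sum_smul_mul_le _ _ _ _ _ _ _ hrow hcol).trans_eq ?_
  calc _ = √(2 * lpNorm f 2 P ^ 2) * √(2 * (φ * lpNorm g 2 P ^ 2)) := by
        rw [sq_lpNorm_two_eq_sum_fiber hs hf0, sq_lpNorm_two_eq_sum_fiber ht hg0, mul_sum,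
          mul_sum, mul_sum]
        simp only [mul_assoc]
    _ = 2 * √φ * lpNorm f 2 P * lpNorm g 2 P := by
        rw [← Real.sqrt_mul (by positivity),
          show 2 * lpNorm f 2 P ^ 2 * (2 * (φ * lpNorm g 2 P ^ 2)) =
            (2 * √φ * lpNorm f 2 P * lpNorm g 2 P) ^ 2 by
            rw [mul_pow, mul_pow, mul_pow, Real.sq_sqrt hφ]; ring,
          Real.sqrt_sq (mul_nonneg (mul_nonneg (by positivity) lpNorm_nonneg) lpNorm_nonneg)]

theorem norm_cov_le_of_phiMixing (hmA : mA ≤ m0) (hmB : mB ≤ m0) {φ : ℝ} (hφ : 0 ≤ φ)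
    (hmix : PhiMixing P mA mB φ) {ξ η : Ω → E} (hξ : StronglyMeasurable[mA] ξ)
    (hη : StronglyMeasurable[mB] η) (hξ2 : MemLp ξ 2 P) (hη2 : MemLp η 2 P) :
    ‖cov P ξ η‖ ≤ 2 * √φ * lpNorm ξ 2 P * lpNorm η 2 P := by
  set a := lpNorm ξ 2 P
  set b := lpNorm η 2 P
  have ha : 0 ≤ a := lpNorm_nonneg
  have hε : ∀ ε > 0,
      ‖cov P ξ η‖ ≤ 2 * √φ * (a + ε) * (b + ε) + 2 * ε * b + 2 * (a + ε) * ε := by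
    intro ε hε
    obtain ⟨f, s, hs, hf, hf2, hξf⟩ := exists_finite_range_lpNorm_sub_le hmA hξ hξ2 hε
    obtain ⟨g, t, ht, hg, hg2, hηg⟩ := exists_finite_range_lpNorm_sub_le hmB hη hη2 hε
    have hfa : lpNorm f 2 P ≤ a + ε :=
      (lpNorm_le_lpNorm_add_lpNorm_sub hξ2 one_le_two).trans (by gcongr)
    have hgb : lpNorm g 2 P ≤ b + ε :=
      (lpNorm_le_lpNorm_add_lpNorm_sub hη2 one_le_two).trans (by gcongr)
    have hsplit : cov P ξ η = cov P f g + cov P (ξ - f) η + cov P f (η - g) := by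
      rw [cov_sub_left hξ2 hf2 hη2, cov_sub_right hf2 hη2 hg2]
      abel
    calc ‖cov P ξ η‖ ≤ ‖cov P f g‖ + ‖cov P (ξ - f) η‖ + ‖cov P f (η - g)‖ :=
          hsplit ▸ norm_add₃_le
      _ ≤ 2 * √φ * lpNorm f 2 P * lpNorm g 2 P + 2 * lpNorm (ξ - f) 2 P * b
            + 2 * lpNorm f 2 P * lpNorm (η - g) 2 P :=
          add_le_add_three (norm_cov_le_of_finite_range hmA hmB hφ hmix hs ht hf hg)
            (norm_cov_le_two_mul (hξ2.sub hf2) hη2) (norm_cov_le_two_mul hf2 (hη2.sub hg2))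
      _ ≤ _ := by gcongr <;> exact lpNorm_nonneg
  have hlim : Tendsto (fun ε => 2 * √φ * (a + ε) * (b + ε) + 2 * ε * b + 2 * (a + ε) * ε)
      (𝓝[>] 0) (𝓝 (2 * √φ * (a + 0) * (b + 0) + 2 * 0 * b + 2 * (a + 0) * 0)) :=
    ((by fun_prop : Continuous _).tendsto 0).mono_left nhdsWithin_le_nhds
  simpa using ge_of_tendsto hlim (eventually_nhdsWithin_of_forall hε)

end PhiMixing

/-- Ibragimov–Linnik covariance inequality for L² random variables:
there is an absolute constant `C` such that for any probability space, any two
sub-σ-algebras whose Ibragimov–Linnik mixing coefficient is at most `φ`, and any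
square-integrable complex random variables `ξ, η` measurable w.r.t. them with
`E‖ξ‖² ≤ a²`, `E‖η‖² ≤ b²`, one has `‖E(ξη) − Eξ·Eη‖ ≤ C a b φ^{1/2}`. -/
theorem stmt_7 :
    ∃ C : ℝ, 0 < C ∧
      ∀ (Ω : Type) (m0 : MeasurableSpace Ω) (P : Measure Ω), IsProbabilityMeasure P →
      ∀ (mA mB : MeasurableSpace Ω), mA ≤ m0 → mB ≤ m0 →
      ∀ (φ a b : ℝ), 0 ≤ φ → 0 ≤ a → 0 ≤ b →
      (∀ A B : Set Ω, MeasurableSet[mA] A → MeasurableSet[mB] B →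
        |(P (A ∩ B)).toReal - (P A).toReal * (P B).toReal| ≤ φ * (P B).toReal) →
      ∀ (ξ η : Ω → ℂ), Measurable[mA] ξ → Measurable[mB] η →
      Integrable (fun ω => ‖ξ ω‖ ^ 2) P → Integrable (fun ω => ‖η ω‖ ^ 2) P →
      (∫ ω, ‖ξ ω‖ ^ 2 ∂P) ≤ a ^ 2 → (∫ ω, ‖η ω‖ ^ 2 ∂P) ≤ b ^ 2 →
      ‖(∫ ω, ξ ω * η ω ∂P) - (∫ ω, ξ ω ∂P) * (∫ ω, η ω ∂P)‖
        ≤ C * a * b * Real.sqrt φ := by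
  refine ⟨2, two_pos, fun Ω m0 P _ mA mB hmA hmB φ a b hφ ha hb hmix ξ η hξ hη hξi hηi hξa hηb
    => ?_⟩
  have hξ2 : MemLp ξ 2 P :=
    (memLp_two_iff_integrable_sq_norm (hξ.mono hmA le_rfl).aestronglyMeasurable).2 hξi
  have hη2 : MemLp η 2 P :=
    (memLp_two_iff_integrable_sq_norm (hη.mono hmB le_rfl).aestronglyMeasurable).2 hηi
  have hξa' : lpNorm ξ 2 P ≤ a := by
    rw [lpNorm_two_eq_sqrt_integral hξ2.1]
    exact (Real.sqrt_le_left ha).2 hξa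
  have hηb' : lpNorm η 2 P ≤ b := by
    rw [lpNorm_two_eq_sqrt_integral hη2.1]
    exact (Real.sqrt_le_left hb).2 hηb
  calc _ ≤ 2 * √φ * lpNorm ξ 2 P * lpNorm η 2 P :=
        norm_cov_le_of_phiMixing hmA hmB hφ hmix hξ.stronglyMeasurable hη.stronglyMeasurable
          hξ2 hη2
    _ ≤ 2 * √φ * a * b := by gcongr; exact lpNorm_nonneg
    _ = 2 * a * b * √φ := by ring
end

section
/- Let ξ, η be complex random variables with |ξ| ≤ a and |η| ≤ b almost surely, measurable with respect to σ-algebras 𝒜, ℬ with Ibragimov–Linnik mixing coefficient φ. Then |E(ξη) − Eξ·Eη| ≤ C a b φ for an absolute constant C. -/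
/-!
Everything rests on one fact about conditional expectations: if `|∫ₛ g| ≤ c` for every
`m`-measurable set `s`, then splitting `Ω` along the sign of `E[g | m]` gives
`E |E[g | m]| ≤ 2c`, hence `|E[h g]| = |E[h E[g | m]]| ≤ 2bc` for every `m`-measurable `h`
with `|h| ≤ b`. With `m = 𝒜` and `g = 1_B - P(B)` this bounds `|E[ξ 1_B] - Eξ P(B)|` by
`2aφ P(B)` for real `ξ`; with `m = ℬ` and `g = ξ - Eξ` it then gives
`|E[ξη] - Eξ Eη| ≤ 4abφ` for real `ξ, η`. Splitting complex `ξ, η` into real and imaginary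
parts costs a factor `4`, so `C = 16`.
-/

open MeasureTheory

section
variable {Ω : Type*} [MeasurableSpace Ω] {μ : Measure Ω}

lemma integral_complex_re {f : Ω → ℂ} (hf : Integrable f μ) :
    ∫ ω, (f ω).re ∂μ = (∫ ω, f ω ∂μ).re :=
  integral_re hf

lemma integral_complex_im {f : Ω → ℂ} (hf : Integrable f μ) :
    ∫ ω, (f ω).im ∂μ = (∫ ω, f ω ∂μ).im :=
  integral_im hf

lemma re_integral_mul_sub_integral_mul {ξ η : Ω → ℂ} (hξ : Integrable ξ μ)
    (hη : Integrable η μ) (hξη : Integrable (fun ω => ξ ω * η ω) μ)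
    (hrr : Integrable (fun ω => (ξ ω).re * (η ω).re) μ)
    (hii : Integrable (fun ω => (ξ ω).im * (η ω).im) μ) :
    ((∫ ω, ξ ω * η ω ∂μ) - (∫ ω, ξ ω ∂μ) * (∫ ω, η ω ∂μ)).re
      = ((∫ ω, (ξ ω).re * (η ω).re ∂μ) - (∫ ω, (ξ ω).re ∂μ) * (∫ ω, (η ω).re ∂μ))
        - ((∫ ω, (ξ ω).im * (η ω).im ∂μ) - (∫ ω, (ξ ω).im ∂μ) * (∫ ω, (η ω).im ∂μ)) := by
  have hre : ∫ ω, (ξ ω * η ω).re ∂μ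
      = ∫ ω, (ξ ω).re * (η ω).re ∂μ - ∫ ω, (ξ ω).im * (η ω).im ∂μ := by
    simp only [Complex.mul_re]
    exact integral_sub hrr hii
  rw [Complex.sub_re, Complex.mul_re, ← integral_complex_re hξη, hre, ← integral_complex_re hξ,
    ← integral_complex_re hη, ← integral_complex_im hξ, ← integral_complex_im hη]
  ring

lemma im_integral_mul_sub_integral_mul {ξ η : Ω → ℂ} (hξ : Integrable ξ μ)
    (hη : Integrable η μ) (hξη : Integrable (fun ω => ξ ω * η ω) μ)
    (hri : Integrable (fun ω => (ξ ω).re * (η ω).im) μ)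
    (hir : Integrable (fun ω => (ξ ω).im * (η ω).re) μ) :
    ((∫ ω, ξ ω * η ω ∂μ) - (∫ ω, ξ ω ∂μ) * (∫ ω, η ω ∂μ)).im
      = ((∫ ω, (ξ ω).re * (η ω).im ∂μ) - (∫ ω, (ξ ω).re ∂μ) * (∫ ω, (η ω).im ∂μ))
        + ((∫ ω, (ξ ω).im * (η ω).re ∂μ) - (∫ ω, (ξ ω).im ∂μ) * (∫ ω, (η ω).re ∂μ)) := by
  have him : ∫ ω, (ξ ω * η ω).im ∂μ
      = ∫ ω, (ξ ω).re * (η ω).im ∂μ + ∫ ω, (ξ ω).im * (η ω).re ∂μ := by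
    simp only [Complex.mul_im]
    exact integral_add hri hir
  rw [Complex.sub_im, Complex.mul_im, ← integral_complex_im hξη, him, ← integral_complex_re hξ,
    ← integral_complex_re hη, ← integral_complex_im hξ, ← integral_complex_im hη]
  ring

end

section
variable {Ω : Type*} {m m0 : MeasurableSpace Ω} {μ : Measure Ω}

lemma integral_abs_condExp_le_of_abs_setIntegral_le (hm : m ≤ m0) [SigmaFinite (μ.trim hm)]
    {g : Ω → ℝ} (hg : Integrable g μ) {c : ℝ}
    (hgc : ∀ s, MeasurableSet[m] s → |∫ x in s, g x ∂μ| ≤ c) :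
    ∫ x, |μ[g|m] x| ∂μ ≤ 2 * c := by
  set S := {x | 0 ≤ μ[g|m] x}
  have hS : MeasurableSet[m] S :=
    measurableSet_le stronglyMeasurable_const.measurable stronglyMeasurable_condExp.measurable
  have hint : Integrable (fun x => |μ[g|m] x|) μ := integrable_condExp.abs
  calc ∫ x, |μ[g|m] x| ∂μ
      = ∫ x in S, μ[g|m] x ∂μ - ∫ x in Sᶜ, μ[g|m] x ∂μ := by
        rw [← integral_add_compl (hm S hS) hint, sub_eq_add_neg, ← integral_neg]
        congr 1
        · exact setIntegral_congr_fun (hm S hS) fun x hx => abs_of_nonneg hx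
        · exact setIntegral_congr_fun (hm S hS).compl fun x hx => abs_of_neg (not_le.1 hx)
    _ = ∫ x in S, g x ∂μ - ∫ x in Sᶜ, g x ∂μ := by
        rw [setIntegral_condExp hm hg hS, setIntegral_condExp hm hg hS.compl]
    _ ≤ 2 * c := by
        linarith [abs_le.1 (hgc S hS), abs_le.1 (hgc Sᶜ hS.compl)]

lemma abs_integral_mul_le_of_abs_setIntegral_le [IsFiniteMeasure μ] (hm : m ≤ m0)
    {g h : Ω → ℝ} {b c : ℝ} (hg : Integrable g μ)
    (hgc : ∀ s, MeasurableSet[m] s → |∫ x in s, g x ∂μ| ≤ c)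
    (hh : StronglyMeasurable[m] h) (hb : 0 ≤ b) (hhb : ∀ᵐ x ∂μ, |h x| ≤ b) :
    |∫ x, h x * g x ∂μ| ≤ 2 * b * c := by
  have hhg : Integrable (h * g) μ := hg.bdd_mul (hh.mono hm).aestronglyMeasurable hhb
  have hpull : ∫ x, h x * g x ∂μ = ∫ x, h x * μ[g|m] x ∂μ :=
    (integral_condExp hm).symm.trans
      (integral_congr_ae (condExp_mul_of_stronglyMeasurable_left hh hhg hg))
  calc |∫ x, h x * g x ∂μ| ≤ ∫ x, b * |μ[g|m] x| ∂μ := by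
        rw [hpull]
        refine abs_integral_le_integral_abs.trans (integral_mono_ae ?_ ?_ ?_)
        · exact (integrable_condExp.bdd_mul (hh.mono hm).aestronglyMeasurable hhb).abs
        · exact integrable_condExp.abs.const_mul b
        · filter_upwards [hhb] with x hx
          rw [abs_mul]
          exact mul_le_mul_of_nonneg_right hx (abs_nonneg _)
    _ ≤ b * (2 * c) := by
        rw [integral_const_mul]
        gcongr
        exact integral_abs_condExp_le_of_abs_setIntegral_le hm hg hgc
    _ = 2 * b * c := by ring

end

/-- `PhiMixingLE P mA mB φ`: the Ibragimov–Linnik coefficient `φ(mA, mB)` is at most `φ`. -/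
def PhiMixingLE {Ω : Type*} [MeasurableSpace Ω] (P : Measure Ω) (mA mB : MeasurableSpace Ω)
    (φ : ℝ) : Prop :=
  ∀ A B : Set Ω, MeasurableSet[mA] A → MeasurableSet[mB] B →
    |P.real (A ∩ B) - P.real A * P.real B| ≤ φ * P.real B

namespace PhiMixingLE

variable {Ω : Type*} {mA mB m0 : MeasurableSpace Ω} {P : Measure Ω} [IsProbabilityMeasure P]
  {φ a b : ℝ}

lemma abs_setIntegral_sub_le (hA : mA ≤ m0) (hB : mB ≤ m0)
    (hmix : PhiMixingLE P mA mB φ) {ξ : Ω → ℝ} (hξ : Measurable[mA] ξ) (ha : 0 ≤ a)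
    (hξa : ∀ᵐ ω ∂P, |ξ ω| ≤ a) {B : Set Ω} (hBm : MeasurableSet[mB] B) :
    |∫ ω in B, ξ ω ∂P - P.real B * ∫ ω, ξ ω ∂P| ≤ 2 * a * (φ * P.real B) := by
  have hB0 : MeasurableSet B := hB B hBm
  have hξint : Integrable ξ P :=
    .of_bound (hξ.stronglyMeasurable.mono hA).aestronglyMeasurable a hξa
  set g : Ω → ℝ := fun ω => B.indicator 1 ω - P.real B
  have hg : Integrable g P := ((integrable_const (1 : ℝ)).indicator hB0).sub (integrable_const _)
  have hgc (S : Set Ω) (hS : MeasurableSet[mA] S) : |∫ ω in S, g ω ∂P| ≤ φ * P.real B := by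
    have : ∫ ω in S, g ω ∂P = P.real (S ∩ B) - P.real S * P.real B := by
      have hind : Integrable (B.indicator (1 : Ω → ℝ)) P := (integrable_const 1).indicator hB0
      rw [integral_sub hind.integrableOn (integrable_const _).integrableOn,
        integral_indicator_one hB0, setIntegral_const, measureReal_restrict_apply hB0,
        Set.inter_comm, smul_eq_mul]
    rw [this]
    exact hmix S B hS hBm
  have hξg : ∫ ω, ξ ω * g ω ∂P = ∫ ω in B, ξ ω ∂P - P.real B * ∫ ω, ξ ω ∂P := by
    simp only [g, mul_sub, ← Set.indicator_mul_right, Pi.one_apply, mul_one]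
    rw [integral_sub (hξint.indicator hB0) (hξint.mul_const _), integral_indicator hB0,
      integral_mul_const, mul_comm]
  rw [← hξg]
  exact abs_integral_mul_le_of_abs_setIntegral_le hA hg hgc hξ.stronglyMeasurable ha hξa

lemma abs_integral_mul_sub_le (hA : mA ≤ m0) (hB : mB ≤ m0)
    (hmix : PhiMixingLE P mA mB φ) (hφ : 0 ≤ φ) {ξ η : Ω → ℝ} (hξ : Measurable[mA] ξ)
    (hη : Measurable[mB] η) (ha : 0 ≤ a) (hb : 0 ≤ b) (hξa : ∀ᵐ ω ∂P, |ξ ω| ≤ a)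
    (hηb : ∀ᵐ ω ∂P, |η ω| ≤ b) :
    |∫ ω, ξ ω * η ω ∂P - (∫ ω, ξ ω ∂P) * ∫ ω, η ω ∂P| ≤ 4 * a * b * φ := by
  have hξint : Integrable ξ P :=
    .of_bound (hξ.stronglyMeasurable.mono hA).aestronglyMeasurable a hξa
  have hηint : Integrable η P :=
    .of_bound (hη.stronglyMeasurable.mono hB).aestronglyMeasurable b hηb
  set g : Ω → ℝ := fun ω => ξ ω - ∫ ω, ξ ω ∂P
  have hgc (S : Set Ω) (hS : MeasurableSet[mB] S) : |∫ ω in S, g ω ∂P| ≤ 2 * a * φ := by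
    rw [integral_sub hξint.integrableOn (integrable_const _).integrableOn, setIntegral_const,
      smul_eq_mul]
    calc _ ≤ 2 * a * (φ * P.real S) := hmix.abs_setIntegral_sub_le hA hB hξ ha hξa hS
      _ ≤ 2 * a * (φ * 1) := by gcongr; exact measureReal_le_one
      _ = 2 * a * φ := by ring
  have hηg : ∫ ω, η ω * g ω ∂P = ∫ ω, ξ ω * η ω ∂P - (∫ ω, ξ ω ∂P) * ∫ ω, η ω ∂P := by
    have hηξ : Integrable (fun ω => η ω * ξ ω) P :=
      hξint.bdd_mul (hη.stronglyMeasurable.mono hB).aestronglyMeasurable hηb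
    simp only [g, mul_sub]
    rw [integral_sub hηξ (hηint.mul_const _), integral_mul_const, mul_comm (∫ ω, η ω ∂P)]
    simp_rw [mul_comm (η _)]
  rw [← hηg]
  calc _ ≤ 2 * b * (2 * a * φ) := abs_integral_mul_le_of_abs_setIntegral_le hB
        (hξint.sub (integrable_const _)) hgc hη.stronglyMeasurable hb hηb
    _ = 4 * a * b * φ := by ring

lemma norm_integral_mul_sub_le (hA : mA ≤ m0) (hB : mB ≤ m0)
    (hmix : PhiMixingLE P mA mB φ) (hφ : 0 ≤ φ) {ξ η : Ω → ℂ} (hξ : Measurable[mA] ξ)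
    (hη : Measurable[mB] η) (ha : 0 ≤ a) (hb : 0 ≤ b) (hξa : ∀ᵐ ω ∂P, ‖ξ ω‖ ≤ a)
    (hηb : ∀ᵐ ω ∂P, ‖η ω‖ ≤ b) :
    ‖∫ ω, ξ ω * η ω ∂P - (∫ ω, ξ ω ∂P) * ∫ ω, η ω ∂P‖ ≤ 16 * a * b * φ := by
  have hξ' : AEStronglyMeasurable ξ P := (hξ.stronglyMeasurable.mono hA).aestronglyMeasurable
  have hη' : AEStronglyMeasurable η P := (hη.stronglyMeasurable.mono hB).aestronglyMeasurable
  have hξint : Integrable ξ P := .of_bound hξ' a hξa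
  have hηint : Integrable η P := .of_bound hη' b hηb
  have hξη : Integrable (fun ω => ξ ω * η ω) P := hηint.bdd_mul hξ' hξa
  have hmul {f g : Ω → ℝ} (hf : Measurable[mA] f) (hg : Measurable[mB] g)
      (hfa : ∀ᵐ ω ∂P, |f ω| ≤ a) (hgb : ∀ᵐ ω ∂P, |g ω| ≤ b) :
      Integrable (fun ω => f ω * g ω) P :=
    (Integrable.of_bound (hg.stronglyMeasurable.mono hB).aestronglyMeasurable b hgb).bdd_mul
      (hf.stronglyMeasurable.mono hA).aestronglyMeasurable hfa
  have hcov {f g : Ω → ℝ} (hf : Measurable[mA] f) (hg : Measurable[mB] g)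
      (hfa : ∀ᵐ ω ∂P, |f ω| ≤ a) (hgb : ∀ᵐ ω ∂P, |g ω| ≤ b) :=
    hmix.abs_integral_mul_sub_le hA hB hφ hf hg ha hb hfa hgb
  have hξr := Complex.measurable_re.comp hξ
  have hξi := Complex.measurable_im.comp hξ
  have hηr := Complex.measurable_re.comp hη
  have hηi := Complex.measurable_im.comp hη
  have hξra : ∀ᵐ ω ∂P, |(ξ ω).re| ≤ a := hξa.mono fun ω h => (Complex.abs_re_le_norm _).trans h
  have hξia : ∀ᵐ ω ∂P, |(ξ ω).im| ≤ a := hξa.mono fun ω h => (Complex.abs_im_le_norm _).trans h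
  have hηrb : ∀ᵐ ω ∂P, |(η ω).re| ≤ b := hηb.mono fun ω h => (Complex.abs_re_le_norm _).trans h
  have hηib : ∀ᵐ ω ∂P, |(η ω).im| ≤ b := hηb.mono fun ω h => (Complex.abs_im_le_norm _).trans h
  calc _ ≤ |(∫ ω, ξ ω * η ω ∂P - (∫ ω, ξ ω ∂P) * ∫ ω, η ω ∂P).re|
        + |(∫ ω, ξ ω * η ω ∂P - (∫ ω, ξ ω ∂P) * ∫ ω, η ω ∂P).im| :=
        Complex.norm_le_abs_re_add_abs_im _
    _ ≤ (4 * a * b * φ + 4 * a * b * φ) + (4 * a * b * φ + 4 * a * b * φ) := by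
        rw [re_integral_mul_sub_integral_mul hξint hηint hξη (hmul hξr hηr hξra hηrb)
            (hmul hξi hηi hξia hηib),
          im_integral_mul_sub_integral_mul hξint hηint hξη (hmul hξr hηi hξra hηib)
            (hmul hξi hηr hξia hηrb)]
        gcongr
        · exact (abs_sub _ _).trans
            (add_le_add (hcov hξr hηr hξra hηrb) (hcov hξi hηi hξia hηib))
        · exact (abs_add_le _ _).trans
            (add_le_add (hcov hξr hηi hξra hηib) (hcov hξi hηr hξia hηrb))
    _ = 16 * a * b * φ := by ring

end PhiMixingLE

/-- Ibragimov–Linnik covariance inequality for bounded random variables: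
there is an absolute constant `C` such that for any probability space, any two
sub-σ-algebras whose Ibragimov–Linnik mixing coefficient is at most `φ`, and any
complex random variables `ξ, η` measurable w.r.t. them with `‖ξ‖ ≤ a`, `‖η‖ ≤ b`
almost surely, one has `‖E(ξη) − Eξ·Eη‖ ≤ C a b φ`. -/
theorem stmt_8 :
    ∃ C : ℝ, 0 < C ∧
      ∀ (Ω : Type) (m0 : MeasurableSpace Ω) (P : Measure Ω), IsProbabilityMeasure P →
      ∀ (mA mB : MeasurableSpace Ω), mA ≤ m0 → mB ≤ m0 →
      ∀ (φ a b : ℝ), 0 ≤ φ → 0 ≤ a → 0 ≤ b →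
      (∀ A B : Set Ω, MeasurableSet[mA] A → MeasurableSet[mB] B →
        |(P (A ∩ B)).toReal - (P A).toReal * (P B).toReal| ≤ φ * (P B).toReal) →
      ∀ (ξ η : Ω → ℂ), Measurable[mA] ξ → Measurable[mB] η →
      (∀ᵐ ω ∂P, ‖ξ ω‖ ≤ a) → (∀ᵐ ω ∂P, ‖η ω‖ ≤ b) →
      ‖(∫ ω, ξ ω * η ω ∂P) - (∫ ω, ξ ω ∂P) * (∫ ω, η ω ∂P)‖ ≤ C * a * b * φ := by
  refine ⟨16, by norm_num, ?_⟩
  intro Ω m0 P hP mA mB hA hB φ a b hφ ha hb hmix ξ η hξ hη hξa hηb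
  exact PhiMixingLE.norm_integral_mul_sub_le hA hB hmix hφ hξ hη ha hb hξa hηb
end

section
/- Let φ: [0,∞) → [0,∞) be nonincreasing with ∫₀^∞ r^{n-2} φ(r)^{1/2} dr = C̄ < ∞ and let S_t ⊂ ℝⁿ be the sphere of radius t centered at the origin (n ≥ 2). Then for every x ∈ S_t and every t ≥ 0, ∫_{S_t} φ(|x−y|)^{1/2} dS(y) ≤ C(n) C̄, where dS is the surface measure; the bound is uniform in t. -/
open MeasureTheory Set Metric Module
open scoped ENNReal NNReal RealInnerProductSpace Function

/-!
For `‖x‖ = t` and `r ≤ t / 2`, the cap `S_t ∩ B(x, r)` lies in the image of the `r`-ball of the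
hyperplane `x⊥` under the graph map `w ↦ w + √(t² - ‖w‖²) • x / t`, which is 2-Lipschitz on the
`t / 2`-ball. Hence `μH[n-1] (S_t ∩ B(x, r)) ≤ K rⁿ⁻¹` with `K` independent of `t`; for `r > t / 2` this
follows instead from `μH[n-1] S_t ≤ tⁿ⁻¹ μH[n-1] S_1`.

Given such a bound, cut `S_t` into the shells `2ᵏ < ‖x - y‖ ≤ 2ᵏ⁺¹`, `k ∈ ℤ`. On the `k`-th shell
`√φ ≤ √φ(2ᵏ)` and the measure is at most `K 2⁽ᵏ⁺¹⁾⁽ⁿ⁻¹⁾`, while monotonicity of `φ` gives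
`∫_{2ᵏ⁻¹}^{2ᵏ} rⁿ⁻² √φ(r) dr ≥ 2⁽ᵏ⁻¹⁾⁽ⁿ⁻¹⁾ √φ(2ᵏ)`; summing over `k` bounds the integral over
`S_t` by `4ⁿ⁻¹ K C̄`.
-/

theorem Ioi_zero_eq_iUnion_Ioc_zpow {b : ℝ} (hb : 1 < b) :
    Ioi (0 : ℝ) = ⋃ k : ℤ, Ioc (b ^ k) (b ^ (k + 1)) := by
  ext r
  simp only [mem_Ioi, mem_iUnion]
  refine ⟨fun hr => exists_mem_Ioc_zpow hr hb, ?_⟩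
  rintro ⟨k, hk, -⟩
  exact (zpow_pos (zero_lt_one.trans hb) k).trans hk

theorem pairwise_disjoint_Ioc_zpow₀ {b : ℝ} (hb : 1 < b) :
    Pairwise (Disjoint on fun k : ℤ => Ioc (b ^ k) (b ^ (k + 1))) := by
  simpa only [Order.succ_eq_add_one] using
    (zpow_right_strictMono₀ hb).monotone.pairwise_disjoint_on_Ioc_succ

theorem setLIntegral_Ioi_zero_eq_tsum_Ioc_zpow (μ : Measure ℝ) (h : ℝ → ℝ≥0∞) {b : ℝ}
    (hb : 1 < b) :
    ∫⁻ r in Ioi 0, h r ∂μ = ∑' k : ℤ, ∫⁻ r in Ioc (b ^ k) (b ^ (k + 1)), h r ∂μ := by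
  rw [Ioi_zero_eq_iUnion_Ioc_zpow hb,
    lintegral_iUnion (fun _ => measurableSet_Ioc) (pairwise_disjoint_Ioc_zpow₀ hb)]

theorem lintegral_le_tsum_preimage_Ioc_zpow {X : Type*} [MeasurableSpace X] {μ : Measure X}
    {f : X → ℝ} (hf₀ : μ {x | f x ≤ 0} = 0) (h : X → ℝ≥0∞) {b : ℝ} (hb : 1 < b) :
    ∫⁻ x, h x ∂μ ≤ ∑' k : ℤ, ∫⁻ x in f ⁻¹' Ioc (b ^ k) (b ^ (k + 1)), h x ∂μ := by
  have hpos : f ⁻¹' Ioi 0 =ᵐ[μ] univ := by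
    rw [ae_eq_univ]
    simpa [compl_def] using hf₀
  rw [← setLIntegral_univ, ← setLIntegral_congr hpos, Ioi_zero_eq_iUnion_Ioc_zpow hb,
    preimage_iUnion]
  exact lintegral_iUnion_le _ _

section Dyadic

variable {X : Type*} [MeasurableSpace X] {μ : Measure X} {f : X → ℝ} {g : ℝ → ℝ≥0∞}
  {K : ℝ≥0∞} {m : ℕ}

theorem setLIntegral_preimage_Ioc_le_of_measure_le_pow (hf : Measurable f)
    (hg : AntitoneOn g (Ioi 0))
    (hμ : ∀ r, 0 ≤ r → μ {x | f x ≤ r} ≤ K * ENNReal.ofReal (r ^ (m + 1)))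
    {s : ℝ} (hs : 0 < s) :
    ∫⁻ x in f ⁻¹' Ioc s (2 * s), g (f x) ∂μ ≤
      4 ^ (m + 1) * K * ∫⁻ r in Ioc (s / 2) s, ENNReal.ofReal (r ^ m) * g r := by
  have hupper : ∫⁻ x in f ⁻¹' Ioc s (2 * s), g (f x) ∂μ ≤
      g s * (K * ENNReal.ofReal ((2 * s) ^ (m + 1))) :=
    calc _ ≤ ∫⁻ _ in f ⁻¹' Ioc s (2 * s), g s ∂μ :=
          setLIntegral_mono' (hf measurableSet_Ioc) fun x hx => hg hs (hs.trans hx.1) hx.1.le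
      _ = g s * μ (f ⁻¹' Ioc s (2 * s)) := setLIntegral_const _ _
      _ ≤ _ := by
          gcongr
          exact (measure_mono fun x hx => hx.2).trans (hμ _ (by positivity))
  have hlower : ENNReal.ofReal ((s / 2) ^ (m + 1)) * g s ≤
      ∫⁻ r in Ioc (s / 2) s, ENNReal.ofReal (r ^ m) * g r :=
    calc ENNReal.ofReal ((s / 2) ^ (m + 1)) * g s
        = ∫⁻ _ in Ioc (s / 2) s, ENNReal.ofReal ((s / 2) ^ m) * g s := by
          rw [setLIntegral_const, Real.volume_Ioc, pow_succ, ENNReal.ofReal_mul (by positivity),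
            show s - s / 2 = s / 2 by ring]
          ring
      _ ≤ _ := setLIntegral_mono' measurableSet_Ioc fun r hr => by
          gcongr
          · exact hr.1.le
          · exact hg (half_pos hs |>.trans hr.1) hs hr.2
  calc _ ≤ g s * (K * ENNReal.ofReal ((2 * s) ^ (m + 1))) := hupper
    _ = 4 ^ (m + 1) * K * (ENNReal.ofReal ((s / 2) ^ (m + 1)) * g s) := by
        rw [show 2 * s = 4 * (s / 2) by ring, mul_pow, ENNReal.ofReal_mul (by positivity),
          ENNReal.ofReal_pow zero_le_four, ENNReal.ofReal_ofNat]
        ring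
    _ ≤ _ := by gcongr

theorem lintegral_comp_le_of_measure_le_pow (hf : Measurable f) (hg : AntitoneOn g (Ioi 0))
    (hμ : ∀ r, 0 ≤ r → μ {x | f x ≤ r} ≤ K * ENNReal.ofReal (r ^ (m + 1))) :
    ∫⁻ x, g (f x) ∂μ ≤ 4 ^ (m + 1) * K * ∫⁻ r in Ioi 0, ENNReal.ofReal (r ^ m) * g r := by
  have hf₀ : μ {x | f x ≤ 0} = 0 := by simpa using hμ 0 le_rfl
  calc ∫⁻ x, g (f x) ∂μ
      ≤ ∑' k : ℤ, ∫⁻ x in f ⁻¹' Ioc (2 ^ k) (2 ^ (k + 1)), g (f x) ∂μ :=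
        lintegral_le_tsum_preimage_Ioc_zpow hf₀ _ one_lt_two
    _ ≤ ∑' k : ℤ, 4 ^ (m + 1) * K *
          ∫⁻ r in Ioc (2 ^ k / 2) (2 ^ k), ENNReal.ofReal (r ^ m) * g r := by
        gcongr with k
        rw [zpow_add_one₀ two_ne_zero, mul_comm]
        exact setLIntegral_preimage_Ioc_le_of_measure_le_pow hf hg hμ (zpow_pos two_pos k)
    _ = 4 ^ (m + 1) * K * ∑' k : ℤ,
          ∫⁻ r in Ioc (2 ^ (k + 1) / 2) (2 ^ (k + 1)), ENNReal.ofReal (r ^ m) * g r := by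
        rw [ENNReal.tsum_mul_left, ← (Equiv.addRight (1 : ℤ)).tsum_eq]
        rfl
    _ = _ := by
        rw [setLIntegral_Ioi_zero_eq_tsum_Ioc_zpow _ _ one_lt_two]
        simp only [zpow_add_one₀ (two_ne_zero (α := ℝ)),
          mul_div_cancel_right₀ _ (two_ne_zero (α := ℝ))]

end Dyadic

theorem abs_sqrt_sq_sub_sq_sub_sqrt_sq_sub_sq_le {t s₁ s₂ : ℝ} (h₁ : 0 ≤ s₁) (h₁' : s₁ ≤ t / 2)
    (h₂ : 0 ≤ s₂) (h₂' : s₂ ≤ t / 2) :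
    |√(t ^ 2 - s₁ ^ 2) - √(t ^ 2 - s₂ ^ 2)| ≤ |s₁ - s₂| := by
  rcases le_or_gt t 0 with ht | ht
  · obtain rfl : s₁ = s₂ := by linarith
    simp
  set g₁ := √(t ^ 2 - s₁ ^ 2)
  set g₂ := √(t ^ 2 - s₂ ^ 2)
  have hsq₁ : g₁ ^ 2 = t ^ 2 - s₁ ^ 2 := Real.sq_sqrt (by nlinarith)
  have hsq₂ : g₂ ^ 2 = t ^ 2 - s₂ ^ 2 := Real.sq_sqrt (by nlinarith)
  have hge₁ : t / 2 ≤ g₁ := (Real.le_sqrt (by linarith) (by nlinarith)).2 (by nlinarith)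
  have hge₂ : t / 2 ≤ g₂ := (Real.le_sqrt (by linarith) (by nlinarith)).2 (by nlinarith)
  have hprod : (g₁ - g₂) * (g₁ + g₂) = (s₂ - s₁) * (s₂ + s₁) := by
    linear_combination hsq₁ - hsq₂
  have hpos : 0 < g₁ + g₂ := by linarith
  refine le_of_mul_le_mul_right ?_ hpos
  calc |g₁ - g₂| * (g₁ + g₂) = |(g₁ - g₂) * (g₁ + g₂)| := by rw [abs_mul, abs_of_pos hpos]
    _ = |s₁ - s₂| * (s₁ + s₂) := by
        rw [hprod, abs_mul, abs_sub_comm, abs_of_nonneg (add_nonneg h₂ h₁), add_comm s₂]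
    _ ≤ |s₁ - s₂| * (g₁ + g₂) := mul_le_mul_of_nonneg_left (by linarith) (abs_nonneg _)

section Graph

variable {E : Type*} [NormedAddCommGroup E] [InnerProductSpace ℝ E]

theorem lipschitzOnWith_add_sqrt_smul {t : ℝ} {u : E} (hu : ‖u‖ = 1) :
    LipschitzOnWith 2 (fun w : E => w + √(t ^ 2 - ‖w‖ ^ 2) • u) (closedBall 0 (t / 2)) := by
  refine LipschitzOnWith.of_dist_le_mul fun w₁ hw₁ w₂ hw₂ => ?_
  rw [mem_closedBall_zero_iff] at hw₁ hw₂
  have hsqrt := abs_sqrt_sq_sub_sq_sub_sqrt_sq_sub_sq_le (norm_nonneg w₁) hw₁ (norm_nonneg w₂) hw₂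
  calc dist (w₁ + √(t ^ 2 - ‖w₁‖ ^ 2) • u) (w₂ + √(t ^ 2 - ‖w₂‖ ^ 2) • u)
      = ‖(w₁ - w₂) + (√(t ^ 2 - ‖w₁‖ ^ 2) - √(t ^ 2 - ‖w₂‖ ^ 2)) • u‖ := by
        rw [dist_eq_norm, sub_smul]
        abel_nf
    _ ≤ ‖w₁ - w₂‖ + |√(t ^ 2 - ‖w₁‖ ^ 2) - √(t ^ 2 - ‖w₂‖ ^ 2)| := by
        refine (norm_add_le _ _).trans_eq ?_
        rw [norm_smul, hu, mul_one, Real.norm_eq_abs]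
    _ ≤ 2 * dist w₁ w₂ := by
        rw [dist_eq_norm]
        linarith [abs_norm_sub_norm_le w₁ w₂]
    _ = _ := by norm_num

theorem sphere_inter_closedBall_subset_image {t r : ℝ} {u : E} (hu : ‖u‖ = 1) (hr : r ≤ t / 2) :
    sphere 0 t ∩ closedBall (t • u) r ⊆
      (fun w : E => w + √(t ^ 2 - ‖w‖ ^ 2) • u) '' ((↑) '' closedBall (0 : (ℝ ∙ u)ᗮ) r) := by
  rintro y ⟨hy, hyx⟩
  rw [mem_sphere_zero_iff_norm] at hy
  rw [mem_closedBall, dist_eq_norm] at hyx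
  set a := ⟪u, y⟫ with ha
  have ha_le : |a| ≤ t := by simpa [hu, hy] using abs_real_inner_le_norm u y
  have hdist : ‖y - t • u‖ ^ 2 = 2 * t * (t - a) := by
    rw [norm_sub_sq_real, real_inner_smul_right, real_inner_comm, norm_smul, hu, hy,
      Real.norm_eq_abs, abs_of_nonneg ((abs_nonneg a).trans ha_le)]
    ring
  have hr_sq : 2 * t * (t - a) ≤ r ^ 2 := by
    rw [← hdist]
    exact pow_le_pow_left₀ (norm_nonneg _) hyx 2
  -- `r ≤ t / 2` keeps the cap inside the hemisphere `⟪u, y⟫ ≥ 0`, where `√(t² - ‖w‖²) = ⟪u, y⟫`.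
  have ha_nonneg : 0 ≤ a := by
    have := abs_le.1 ha_le
    nlinarith [norm_nonneg (y - t • u)]
  set w := y - a • u with hw
  have hw_orth : w ∈ (ℝ ∙ u)ᗮ := by
    rw [Submodule.mem_orthogonal_singleton_iff_inner_right, hw, inner_sub_right,
      real_inner_smul_right, real_inner_self_eq_norm_sq, hu]
    ring
  have hw_sq : ‖w‖ ^ 2 = t ^ 2 - a ^ 2 := by
    rw [hw, norm_sub_sq_real, real_inner_smul_right, real_inner_comm, ← ha, norm_smul, hu, hy,
      Real.norm_eq_abs, mul_one, sq_abs]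
    ring
  have hw_le : ‖w‖ ≤ r := by
    have := abs_le.1 ha_le
    refine pow_le_pow_iff_left₀ (norm_nonneg w) ((norm_nonneg _).trans hyx) two_ne_zero |>.1 ?_
    nlinarith
  refine ⟨w, ⟨⟨w, hw_orth⟩, by simpa using hw_le, rfl⟩, ?_⟩
  show w + √(t ^ 2 - ‖w‖ ^ 2) • u = y
  rw [hw_sq, sub_sub_cancel, Real.sqrt_sq ha_nonneg, hw, sub_add_cancel]

end Graph

instance isAddHaarMeasure_hausdorffMeasure_euclideanSpace (m : ℕ) :
    (μH[m] : Measure (EuclideanSpace ℝ (Fin m))).IsAddHaarMeasure := by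
  simpa only [finrank_euclideanSpace_fin] using
    isAddHaarMeasure_hausdorffMeasure (E := EuclideanSpace ℝ (Fin m))

theorem hausdorffMeasure_unitClosedBall_lt_top (m : ℕ) :
    μH[m] (closedBall (0 : EuclideanSpace ℝ (Fin m)) 1) < ∞ :=
  measure_closedBall_lt_top

theorem hausdorffMeasure_closedBall_of_finrank_eq {F : Type*} [NormedAddCommGroup F]
    [InnerProductSpace ℝ F] [FiniteDimensional ℝ F] [MeasurableSpace F] [BorelSpace F] {m : ℕ}
    (hF : finrank ℝ F = m) {r : ℝ} (hr : 0 ≤ r) :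
    μH[m] (closedBall (0 : F) r) =
      ENNReal.ofReal (r ^ m) * μH[m] (closedBall (0 : EuclideanSpace ℝ (Fin m)) 1) := by
  let e : F ≃ₗᵢ[ℝ] EuclideanSpace ℝ (Fin m) :=
    ((stdOrthonormalBasis ℝ F).reindex (finCongr hF)).repr
  rw [← e.isometry.hausdorffMeasure_image (Or.inr e.surjective), e.image_closedBall, map_zero,
    Measure.addHaar_closedBall' _ _ hr, finrank_euclideanSpace_fin]

theorem hausdorffMeasure_sphere_le {V : Type*} [NormedAddCommGroup V] [NormedSpace ℝ V]
    [Nontrivial V] [MeasurableSpace V] [BorelSpace V] (m : ℕ) {t : ℝ} (ht : 0 ≤ t) :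
    μH[m] (sphere (0 : V) t) ≤ ENNReal.ofReal (t ^ m) * μH[m] (sphere (0 : V) 1) := by
  have hsphere : sphere (0 : V) t = (t • ·) '' sphere 0 1 := by
    rw [image_smul, smul_sphere t 0 zero_le_one, smul_zero, Real.norm_of_nonneg ht, mul_one]
  rw [hsphere]
  refine ((lipschitzWith_smul t).hausdorffMeasure_image_le (Nat.cast_nonneg _) _).trans_eq ?_
  rw [ENNReal.rpow_natCast, ENNReal.ofReal_pow ht, ← Real.enorm_eq_ofReal ht]
  rfl

section SphereCap

variable {E : Type*} [NormedAddCommGroup E] [InnerProductSpace ℝ E] [FiniteDimensional ℝ E]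
  [MeasurableSpace E] [BorelSpace E] {m : ℕ}

theorem hausdorffMeasure_sphere_inter_closedBall_le_of_le_half (hE : finrank ℝ E = m + 1)
    {x : E} (hx : x ≠ 0) {r : ℝ} (hr₀ : 0 ≤ r) (hr : r ≤ ‖x‖ / 2) :
    μH[m] (sphere 0 ‖x‖ ∩ closedBall x r) ≤
      2 ^ m * μH[m] (closedBall (0 : EuclideanSpace ℝ (Fin m)) 1) * ENNReal.ofReal (r ^ m) := by
  set u := ‖x‖⁻¹ • x
  have hu : ‖u‖ = 1 := norm_smul_inv_norm hx
  have hxu : ‖x‖ • u = x := by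
    rw [smul_smul, mul_inv_cancel₀ (norm_ne_zero_iff.2 hx), one_smul]
  have : Fact (finrank ℝ E = m + 1) := ⟨hE⟩
  have hF : finrank ℝ (ℝ ∙ u)ᗮ = m :=
    Submodule.finrank_orthogonal_span_singleton (norm_ne_zero_iff.1 (hu.symm ▸ one_ne_zero))
  set D : Set E := (↑) '' closedBall (0 : (ℝ ∙ u)ᗮ) r
  have hD : D ⊆ closedBall 0 (‖x‖ / 2) := by
    rintro _ ⟨w, hw, rfl⟩
    simpa using (mem_closedBall_zero_iff.1 hw).trans hr
  have hcap := sphere_inter_closedBall_subset_image hu hr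
  rw [hxu] at hcap
  calc μH[m] (sphere 0 ‖x‖ ∩ closedBall x r)
      ≤ μH[m] ((fun w : E => w + √(‖x‖ ^ 2 - ‖w‖ ^ 2) • u) '' D) := measure_mono hcap
    _ ≤ (2 : ℝ≥0) ^ (m : ℝ) * μH[m] D :=
        ((lipschitzOnWith_add_sqrt_smul hu).mono hD).hausdorffMeasure_image_le (Nat.cast_nonneg _)
    _ = 2 ^ m * μH[m] (closedBall (0 : (ℝ ∙ u)ᗮ) r) := by
        rw [(Submodule.subtypeₗᵢ _).isometry.hausdorffMeasure_image (Or.inl (Nat.cast_nonneg _)),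
          ENNReal.rpow_natCast]
        rfl
    _ = _ := by
        rw [hausdorffMeasure_closedBall_of_finrank_eq hF hr₀]
        ring

theorem hausdorffMeasure_unitSphere_lt_top (hE : finrank ℝ E = m + 1) :
    μH[m] (sphere (0 : E) 1) < ∞ := by
  obtain ⟨T, hTS, hT, hcover⟩ :=
    finite_cover_balls_of_compact (isCompact_sphere (0 : E) 1) one_half_pos
  have hsub : sphere (0 : E) 1 ⊆ ⋃ y ∈ T, sphere 0 ‖y‖ ∩ closedBall y (1 / 2) := by
    intro z hz
    obtain ⟨y, hy, hzy⟩ := mem_iUnion₂.1 (hcover hz)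
    refine mem_iUnion₂.2 ⟨y, hy, ?_⟩
    rw [mem_sphere_zero_iff_norm.1 (hTS hy)]
    exact ⟨hz, ball_subset_closedBall hzy⟩
  refine (measure_mono hsub).trans_lt (measure_biUnion_lt_top hT fun y hy => ?_)
  have hy : ‖y‖ = 1 := mem_sphere_zero_iff_norm.1 (hTS hy)
  refine (hausdorffMeasure_sphere_inter_closedBall_le_of_le_half hE
    (norm_ne_zero_iff.1 (hy.symm ▸ one_ne_zero)) one_half_pos.le (by rw [hy])).trans_lt ?_
  have := hausdorffMeasure_unitClosedBall_lt_top m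
  finiteness

theorem exists_hausdorffMeasure_sphere_inter_closedBall_le (hE : finrank ℝ E = m + 1) :
    ∃ K : ℝ≥0, ∀ (x : E) (r : ℝ), 0 ≤ r →
      μH[m] (sphere 0 ‖x‖ ∩ closedBall x r) ≤ K * ENNReal.ofReal (r ^ m) := by
  have : Nontrivial E := Module.nontrivial_of_finrank_eq_succ hE
  set ω := μH[m] (closedBall (0 : EuclideanSpace ℝ (Fin m)) 1)
  set σ := μH[m] (sphere (0 : E) 1)
  have hω : ω < ∞ := hausdorffMeasure_unitClosedBall_lt_top m
  have hσ : σ < ∞ := hausdorffMeasure_unitSphere_lt_top hE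
  refine ⟨(2 ^ m * (ω + σ)).toNNReal, fun x r hr => ?_⟩
  rw [ENNReal.coe_toNNReal (by finiteness)]
  rcases lt_or_ge (2 * r) ‖x‖ with hsmall | hlarge
  · have hx : x ≠ 0 := norm_pos_iff.1 (by linarith)
    calc _ ≤ 2 ^ m * ω * ENNReal.ofReal (r ^ m) :=
          hausdorffMeasure_sphere_inter_closedBall_le_of_le_half hE hx hr (by linarith)
      _ ≤ _ := by gcongr; exact le_self_add
  · calc _ ≤ μH[m] (sphere (0 : E) ‖x‖) := measure_mono inter_subset_left
      _ ≤ ENNReal.ofReal (‖x‖ ^ m) * σ := hausdorffMeasure_sphere_le m (norm_nonneg x)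
      _ ≤ ENNReal.ofReal ((2 * r) ^ m) * σ := by gcongr
      _ = 2 ^ m * σ * ENNReal.ofReal (r ^ m) := by
          rw [mul_pow, ENNReal.ofReal_mul (by positivity), ENNReal.ofReal_pow zero_le_two,
            ENNReal.ofReal_ofNat]
          ring
      _ ≤ _ := by gcongr; exact le_add_self

end SphereCap

/-- Uniform bound for the sphere convolution of a mixing-type kernel:
for `n ≥ 2` there is a constant `C(n)` such that for every nonincreasing
nonnegative `φ` with `∫₀^∞ r^{n-2} √(φ r) dr = C̄ < ∞`, every `t ≥ 0` and every
point `x` on the sphere `S_t = {‖y‖ = t}`,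
`∫_{S_t} √(φ (‖x - y‖)) dS(y) ≤ C(n) C̄`, where `dS` is the surface
((n-1)-dimensional Hausdorff) measure. -/
theorem stmt_11 (n : ℕ) (hn : 2 ≤ n) :
    ∃ C : ℝ, 0 < C ∧
      ∀ (φ : ℝ → ℝ), (∀ r, 0 ≤ r → 0 ≤ φ r) → AntitoneOn φ (Ici 0) →
      ∀ Cbar : ℝ,
      IntegrableOn (fun r => r ^ (n - 2) * Real.sqrt (φ r)) (Ioi 0) →
      (∫ r in Ioi (0:ℝ), r ^ (n - 2) * Real.sqrt (φ r)) = Cbar →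
      ∀ t : ℝ, 0 ≤ t →
      ∀ x : EuclideanSpace ℝ (Fin n), x ∈ Metric.sphere (0 : EuclideanSpace ℝ (Fin n)) t →
      (∫⁻ y in Metric.sphere (0 : EuclideanSpace ℝ (Fin n)) t,
          ENNReal.ofReal (Real.sqrt (φ ‖x - y‖)) ∂(μH[(n : ℝ) - 1]))
        ≤ ENNReal.ofReal (C * Cbar) := by
  obtain ⟨m, rfl⟩ : ∃ m, n = m + 2 := ⟨n - 2, by omega⟩
  obtain ⟨K, hK⟩ := exists_hausdorffMeasure_sphere_inter_closedBall_le
    (E := EuclideanSpace ℝ (Fin (m + 2))) (m := m + 1) (finrank_euclideanSpace_fin)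
  refine ⟨4 ^ (m + 1) * (K + 1), by positivity, fun φ _ hφ Cbar hint hCbar t _ x hx => ?_⟩
  rw [mem_sphere_zero_iff_norm] at hx
  subst hx
  rw [Nat.add_sub_cancel] at hint hCbar
  have hg : AntitoneOn (fun r => ENNReal.ofReal √(φ r)) (Ioi 0) := fun a ha b hb hab =>
    ENNReal.ofReal_le_ofReal (Real.sqrt_le_sqrt (hφ.mono Ioi_subset_Ici_self ha hb hab))
  have hμ : ∀ r, 0 ≤ r → (μH[(m + 1 : ℕ)].restrict (sphere 0 ‖x‖)) {y | ‖x - y‖ ≤ r} ≤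
      K * ENNReal.ofReal (r ^ (m + 1)) := by
    intro r hr
    rw [Measure.restrict_apply' isClosed_sphere.measurableSet, inter_comm]
    convert hK x r hr using 3
    ext y
    simp [dist_eq_norm, norm_sub_rev]
  have hCbar' : ∫⁻ r in Ioi 0, ENNReal.ofReal (r ^ m) * ENNReal.ofReal √(φ r) =
      ENNReal.ofReal Cbar := by
    rw [← hCbar, ofReal_integral_eq_lintegral_ofReal hint
      ((ae_restrict_iff' measurableSet_Ioi).2 (ae_of_all _ fun r hr =>
        mul_nonneg (pow_nonneg (le_of_lt hr) _) (Real.sqrt_nonneg _)))]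
    refine setLIntegral_congr_fun measurableSet_Ioi fun r hr => ?_
    rw [ENNReal.ofReal_mul (pow_nonneg (le_of_lt hr) _)]
  rw [show ((m + 2 : ℕ) : ℝ) - 1 = (m + 1 : ℕ) by push_cast; ring]
  calc _ ≤ 4 ^ (m + 1) * K * ENNReal.ofReal Cbar :=
        hCbar' ▸ lintegral_comp_le_of_measure_le_pow (by fun_prop) hg hμ
    _ ≤ ENNReal.ofReal (4 ^ (m + 1) * (K + 1)) * ENNReal.ofReal Cbar := by
        rw [ENNReal.ofReal_mul (by positivity), ENNReal.ofReal_pow zero_le_four,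
          ENNReal.ofReal_ofNat]
        gcongr
        rw [← ENNReal.ofReal_coe_nnreal]
        exact ENNReal.ofReal_le_ofReal (by linarith)
    _ = _ := (ENNReal.ofReal_mul (by positivity)).symm
end
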